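/- arXiv:2507.18871 — 6 statements merged into one kernel-verified Lean document; each statement's English description precedes it below -/
import Mathlib

section
/- Let H be a Hilbert space over 𝕜 (𝕜 = ℝ or ℂ), A a positive bounded linear operator on H, T an A-bounded operator on H, and let x ∈ H with ‖x‖_A ≠ 0. Then T preserves A-orthogonality at x if and only if ⟨Ty, Tx⟩_A = (‖Tx‖_A² / ‖x‖_A²) · ⟨y, x⟩_A for all y ∈ H. -/
open ContinuousLinearMap

variable {𝕜 H : Type*}

/-- The semi-norm induced by the positive operator `A`: `‖x‖_A = √(re ⟪A x, x⟫)`. -/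
noncomputable def seminormA [RCLike 𝕜] [NormedAddCommGroup H] [InnerProductSpace 𝕜 H]
    (A : H →L[𝕜] H) (x : H) : ℝ :=
  Real.sqrt (RCLike.re (inner 𝕜 (A x) x : 𝕜))

/-- The semi-inner product induced by `A`: `⟨x, y⟩_A = ⟪A x, y⟫`. -/
noncomputable def ipA [RCLike 𝕜] [NormedAddCommGroup H] [InnerProductSpace 𝕜 H]
    (A : H →L[𝕜] H) (x y : H) : 𝕜 :=
  inner 𝕜 (A x) y

/-- `T` is `A`-bounded. -/
def ABounded [RCLike 𝕜] [NormedAddCommGroup H] [InnerProductSpace 𝕜 H]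
    (A T : H →L[𝕜] H) : Prop :=
  ∃ c : ℝ, 0 < c ∧ ∀ z : H, seminormA A (T z) ≤ c * seminormA A z

/-- `T` preserves `A`-orthogonality at `x`. -/
def PreservesAOrthAt [RCLike 𝕜] [NormedAddCommGroup H] [InnerProductSpace 𝕜 H]
    (A T : H →L[𝕜] H) (x : H) : Prop :=
  ∀ y : H, ipA A x y = 0 → ipA A (T x) (T y) = 0

/-- `‖T‖_A`, the `A`-operator seminorm. -/
noncomputable def opNormA [RCLike 𝕜] [NormedAddCommGroup H] [InnerProductSpace 𝕜 H]
    (A T : H →L[𝕜] H) : ℝ :=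
  sSup ((fun u => seminormA A (T u)) '' {u : H | seminormA A u = 1})

/-- `m_A(T)`, the minimum `A`-norm of `T`. -/
noncomputable def minNormA [RCLike 𝕜] [NormedAddCommGroup H] [InnerProductSpace 𝕜 H]
    (A T : H →L[𝕜] H) : ℝ :=
  sInf ((fun u => seminormA A (T u)) '' {u : H | seminormA A u = 1})

theorem statement6 [RCLike 𝕜] [NormedAddCommGroup H] [InnerProductSpace 𝕜 H] [CompleteSpace H]
    (A T : H →L[𝕜] H) (hA : A.IsPositive) (hT : ABounded A T)
    (x : H) (hx : seminormA A x ≠ 0) :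
    PreservesAOrthAt A T x ↔
      (∀ y : H, ipA A (T y) (T x)
        = (((seminormA A (T x)) ^ 2 / (seminormA A x) ^ 2 : ℝ) : 𝕜) * ipA A y x) := by
  have hsym : (A : H →ₗ[𝕜] H).IsSymmetric := hA.isSelfAdjoint.isSymmetric
  have hconj : ∀ u v : H, (starRingEnd 𝕜) (inner 𝕜 (A u) v : 𝕜) = inner 𝕜 (A v) u := by
    intro u v
    rw [inner_conj_symm, ← hsym.apply_clm]
  -- real values
  have hxx_nn : 0 ≤ RCLike.re (inner 𝕜 (A x) x : 𝕜) := (RCLike.nonneg_iff.mp (hA.inner_nonneg_left x)).1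
  have hTx_nn : 0 ≤ RCLike.re (inner 𝕜 (A (T x)) (T x) : 𝕜) := (RCLike.nonneg_iff.mp (hA.inner_nonneg_left (T x))).1
  have hreal : ∀ u : H, ((RCLike.re (inner 𝕜 (A u) u : 𝕜) : ℝ) : 𝕜) = inner 𝕜 (A u) u := by
    intro u
    have := hconj u u
    rw [RCLike.conj_eq_iff_re] at this
    exact this
  have hx2 : (seminormA A x) ^ 2 = RCLike.re (inner 𝕜 (A x) x : 𝕜) := Real.sq_sqrt hxx_nn
  have hTx2 : (seminormA A (T x)) ^ 2 = RCLike.re (inner 𝕜 (A (T x)) (T x) : 𝕜) :=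
    Real.sq_sqrt hTx_nn
  have hxx_pos : 0 < RCLike.re (inner 𝕜 (A x) x : 𝕜) := by
    rcases lt_or_eq_of_le hxx_nn with h | h
    · exact h
    · exact absurd (by simp [seminormA, ← h]) hx
  have hxx_ne : (inner 𝕜 (A x) x : 𝕜) ≠ 0 := by
    intro h
    rw [← hreal x] at h
    exact hxx_pos.ne' (by exact_mod_cast h)
  constructor
  · intro hpres y
    set lam : 𝕜 := inner 𝕜 (A x) y / inner 𝕜 (A x) x with hlam
    have hy0 : ipA A x (y - lam • x) = 0 := by
      show (inner 𝕜 (A x) (y - lam • x) : 𝕜) = 0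
      rw [inner_sub_right, inner_smul_right, hlam, div_mul_cancel₀ _ hxx_ne, sub_self]
    have h0 := hpres _ hy0
    simp only [ipA, map_sub, map_smul, inner_sub_right, inner_smul_right, sub_eq_zero] at h0
    -- h0 : ⟪A Tx, Ty⟫ = lam * ⟪A Tx, Tx⟫
    have key : (inner 𝕜 (A (T y)) (T x) : 𝕜)
        = (starRingEnd 𝕜) lam * inner 𝕜 (A (T x)) (T x) := by
      rw [← hconj (T x) (T y), h0, map_mul, hconj (T x) (T x)]
    rw [ipA, key, ipA]
    have hclam : (starRingEnd 𝕜) lam = inner 𝕜 (A y) x / inner 𝕜 (A x) x := by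
      rw [hlam, map_div₀, hconj x y, RCLike.conj_eq_iff_re.mpr (hreal x)]
    rw [hclam, hTx2, hx2, RCLike.ofReal_div, hreal x, hreal (T x)]
    field_simp
  · intro hf y hy
    have hy0 : (inner 𝕜 (A x) y : 𝕜) = 0 := hy
    have hy' : (inner 𝕜 (A y) x : 𝕜) = 0 := by rw [← hconj x y, hy0, map_zero]
    have h1 : (inner 𝕜 (A (T y)) (T x) : 𝕜) = 0 := by
      have := hf y
      simp only [ipA] at this
      rw [this, hy', mul_zero]
    show (inner 𝕜 (A (T x)) (T y) : 𝕜) = 0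
    rw [← hconj (T y) (T x), h1, map_zero]
end

section
/- Let H be a Hilbert space over 𝕜 (𝕜 = ℝ or ℂ), A a positive bounded linear operator on H, T an A-bounded operator on H, and x ∈ H. If T preserves A-orthogonality at x, then either ‖Tx‖_A = 0, or every u ∈ H with ‖Tu‖_A = 0 satisfies ⟨u, x⟩_A = 0 (that is, N_A(T) ⊆ x^{⊥_A}). -/
open ContinuousLinearMap

variable {𝕜 H : Type*}

section Aux

variable [RCLike 𝕜] [NormedAddCommGroup H] [InnerProductSpace 𝕜 H] [CompleteSpace H]

lemma ipA_symm_conj (A : H →L[𝕜] H) (hA : A.IsPositive) (w z : H) :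
    ipA A w z = starRingEnd 𝕜 (ipA A z w) := by
  have h1 : (inner 𝕜 (A z) w : 𝕜) = inner 𝕜 z (A w) := by
    conv_lhs => rw [← (ContinuousLinearMap.isSelfAdjoint_iff'.1 hA.isSelfAdjoint)]
    exact ContinuousLinearMap.adjoint_inner_left A w z
  rw [ipA, ipA, h1, ← inner_conj_symm]

/-- The pre-inner-product core induced by a positive operator. -/
noncomputable def coreA (A : H →L[𝕜] H) (hA : A.IsPositive) :
    PreInnerProductSpace.Core 𝕜 H where
  inner w z := inner 𝕜 (A w) z
  conj_inner_symm w z := (ipA_symm_conj A hA w z).symm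
  re_inner_nonneg w := hA.re_inner_nonneg_left w
  add_left w z v := by simp [inner_add_left]
  smul_left w z r := by simp [inner_smul_left]

lemma cauchyA (A : H →L[𝕜] H) (hA : A.IsPositive) (w z : H) :
    ‖(inner 𝕜 (A w) z : 𝕜)‖ * ‖(inner 𝕜 (A z) w : 𝕜)‖
      ≤ RCLike.re (inner 𝕜 (A w) w : 𝕜) * RCLike.re (inner 𝕜 (A z) z : 𝕜) :=
  InnerProductSpace.Core.inner_mul_inner_self_le (c := coreA A hA) w z

lemma ipA_eq_zero_of_seminormA_right (A : H →L[𝕜] H) (hA : A.IsPositive) {z : H}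
    (hz : seminormA A z = 0) (w : H) : ipA A w z = 0 := by
  have hzz : RCLike.re (inner 𝕜 (A z) z : 𝕜) = 0 :=
    le_antisymm (Real.sqrt_eq_zero'.1 hz) (hA.re_inner_nonneg_left z)
  have hcs := cauchyA A hA w z
  rw [hzz, mul_zero] at hcs
  have heq : ‖(inner 𝕜 (A z) w : 𝕜)‖ = ‖(inner 𝕜 (A w) z : 𝕜)‖ := by
    rw [show (inner 𝕜 (A z) w : 𝕜) = starRingEnd 𝕜 (inner 𝕜 (A w) z) from ipA_symm_conj A hA z w,
      RCLike.norm_conj]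
  rw [heq] at hcs
  have : ‖(inner 𝕜 (A w) z : 𝕜)‖ = 0 := by nlinarith [norm_nonneg (inner 𝕜 (A w) z : 𝕜)]
  simpa [ipA] using norm_eq_zero.1 this

end Aux

theorem statement7 [RCLike 𝕜] [NormedAddCommGroup H] [InnerProductSpace 𝕜 H] [CompleteSpace H]
    (A T : H →L[𝕜] H) (hA : A.IsPositive) (hT : ABounded A T)
    (x : H) (hpres : PreservesAOrthAt A T x) :
    seminormA A (T x) = 0 ∨ ∀ u : H, seminormA A (T u) = 0 → ipA A u x = 0 := by
  by_cases hTx : seminormA A (T x) = 0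
  · exact Or.inl hTx
  right
  intro u hu
  obtain ⟨c, _hc, hb⟩ := hT
  have hx0 : seminormA A x ≠ 0 := by
    intro h
    apply hTx
    have h1 := hb x
    rw [h, mul_zero] at h1
    exact le_antisymm h1 (Real.sqrt_nonneg _)
  have hr : RCLike.re (inner 𝕜 (A x) x : 𝕜) ≠ 0 := by
    intro h
    exact hx0 (by rw [seminormA, h, Real.sqrt_zero])
  set r : ℝ := RCLike.re (inner 𝕜 (A x) x : 𝕜) with hrdef
  have hxx : (inner 𝕜 (A x) x : 𝕜) = (r : 𝕜) :=
    (RCLike.conj_eq_iff_re.1 (ipA_symm_conj A hA x x).symm).symm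
  have hrk : (r : 𝕜) ≠ 0 := by exact_mod_cast hr
  set lam : 𝕜 := ipA A x u / (r : 𝕜) with hlam
  have hy : ipA A x (u - lam • x) = 0 := by
    simp only [ipA] at *
    rw [inner_sub_right, inner_smul_right, hxx, hlam, div_mul_cancel₀ _ hrk, sub_self]
  have hp := hpres _ hy
  rw [map_sub, map_smul] at hp
  simp only [ipA, inner_sub_right, inner_smul_right] at hp
  have h0 : (inner 𝕜 (A (T x)) (T u) : 𝕜) = 0 :=
    ipA_eq_zero_of_seminormA_right A hA hu (T x)
  rw [h0, zero_sub, neg_eq_zero] at hp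
  have hTxx : (inner 𝕜 (A (T x)) (T x) : 𝕜) ≠ 0 := by
    intro h
    apply hTx
    rw [seminormA, h, map_zero, Real.sqrt_zero]
  have hlam0 : lam = 0 := by
    rcases mul_eq_zero.1 hp with h | h
    · exact h
    · exact absurd h hTxx
  have hxu : ipA A x u = 0 := by
    rw [hlam] at hlam0
    rcases div_eq_zero_iff.1 hlam0 with h | h
    · exact h
    · exact absurd h hrk
  rw [ipA_symm_conj A hA u x, hxu, map_zero]
end

section
/- Let H be a Hilbert space over 𝕜 (𝕜 = ℝ or ℂ), A a positive bounded linear operator on H, and T an A-bounded operator on H. Suppose x ∈ H satisfies ‖x‖_A = 1 and ‖Tx‖_A ≠ m_A(T) (i.e., x ∈ S_{H(A)} \ m_T^A). If T preserves A-orthogonality at x, then every z ∈ m_T^A satisfies ⟨z, x⟩_A = 0. -/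
set_option linter.unusedSectionVars false


open ContinuousLinearMap

variable {𝕜 H : Type*}

section aux

variable [RCLike 𝕜] [NormedAddCommGroup H] [InnerProductSpace 𝕜 H] [CompleteSpace H]

local notation "⟪" x ", " y "⟫" => @inner 𝕜 _ _ x y

lemma snA_nonneg (A : H →L[𝕜] H) (u : H) : 0 ≤ seminormA A u := Real.sqrt_nonneg _

lemma snA_sq (A : H →L[𝕜] H) (hA : A.IsPositive) (u : H) :
    seminormA A u ^ 2 = RCLike.re (⟪A u, u⟫) := by
  rw [seminormA]; exact Real.sq_sqrt (hA.2 u)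

lemma snA_smul (A : H →L[𝕜] H) (a : 𝕜) (u : H) :
    seminormA A (a • u) = ‖a‖ * seminormA A u := by
  have h : (⟪A (a • u), a • u⟫ : 𝕜) = (‖a‖ ^ 2 : ℝ) * ⟪A u, u⟫ := by
    rw [map_smul, inner_smul_left, inner_smul_right, ← mul_assoc, RCLike.conj_mul]
    norm_cast
  rw [seminormA, seminormA, h, RCLike.re_ofReal_mul, Real.sqrt_mul (sq_nonneg _),
    Real.sqrt_sq (norm_nonneg _)]

lemma minNormA_nonneg (A T : H →L[𝕜] H) : 0 ≤ minNormA A T := by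
  apply Real.sInf_nonneg
  rintro r ⟨u, -, rfl⟩
  exact snA_nonneg A (T u)

lemma minNormA_le (A T : H →L[𝕜] H) {u : H} (h : seminormA A u = 1) :
    minNormA A T ≤ seminormA A (T u) := by
  apply csInf_le
  · exact ⟨0, by rintro r ⟨v, -, rfl⟩; exact snA_nonneg A (T v)⟩
  · exact ⟨u, h, rfl⟩

lemma minNormA_mul_le (A T : H →L[𝕜] H) (hT : ABounded A T) (u : H) :
    minNormA A T * seminormA A u ≤ seminormA A (T u) := by
  rcases eq_or_lt_of_le (snA_nonneg A u) with h0 | hpos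
  · obtain ⟨C, -, hC⟩ := hT
    have h1 : seminormA A (T u) ≤ 0 := by
      have := hC u; rw [← h0] at this; simpa using this
    have h2 : seminormA A (T u) = 0 := le_antisymm h1 (snA_nonneg A (T u))
    rw [← h0, mul_zero, h2]
  · set s := seminormA A u with hs
    have hu1 : seminormA A (((s⁻¹ : ℝ) : 𝕜) • u) = 1 := by
      rw [snA_smul, RCLike.norm_ofReal, abs_inv, abs_of_pos hpos, ← hs,
        inv_mul_cancel₀ hpos.ne']
    have := minNormA_le A T hu1
    rw [map_smul, snA_smul] at this
    have h2 : minNormA A T ≤ s⁻¹ * seminormA A (T u) := by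
      rwa [RCLike.norm_ofReal, abs_inv, abs_of_pos hpos] at this
    calc minNormA A T * s ≤ (s⁻¹ * seminormA A (T u)) * s := by
          exact mul_le_mul_of_nonneg_right h2 hpos.le
      _ = seminormA A (T u) := by field_simp
end aux

theorem statement8 [RCLike 𝕜] [NormedAddCommGroup H] [InnerProductSpace 𝕜 H] [CompleteSpace H]
    (A T : H →L[𝕜] H) (hA : A.IsPositive) (hT : ABounded A T)
    (x : H) (hx1 : seminormA A x = 1) (hx2 : seminormA A (T x) ≠ minNormA A T)
    (hpres : PreservesAOrthAt A T x) :
    ∀ z : H, seminormA A z = 1 → seminormA A (T z) = minNormA A T → ipA A z x = 0 := by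
  intro z hz1 hz2
  have sym' : (A : H →ₗ[𝕜] H).IsSymmetric := hA.1
  have sym : ∀ u v : H, (inner 𝕜 (A u) v : 𝕜) = inner 𝕜 u (A v) := fun u v => sym' u v
  set c : 𝕜 := inner 𝕜 (A x) z with hc
  -- ⟪A x, x⟫ = 1
  have hre1 : RCLike.re (inner 𝕜 (A x) x : 𝕜) = 1 := by
    have := snA_sq A hA x
    rw [hx1] at this
    simpa using this.symm
  have hreal : (inner 𝕜 (A x) x : 𝕜) = 1 := by
    have hconj : (starRingEnd 𝕜) (inner 𝕜 (A x) x : 𝕜) = (inner 𝕜 (A x) x : 𝕜) := by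
      rw [inner_conj_symm]
      exact (sym x x).symm
    rw [RCLike.conj_eq_iff_re] at hconj
    rw [← hconj, hre1]
    simp
  set y : H := z - c • x with hy
  have horth : ipA A x y = 0 := by
    rw [ipA, hy, inner_sub_right, inner_smul_right, hreal, mul_one, ← hc, sub_self]
  have hTxy : (inner 𝕜 (A (T x)) (T y) : 𝕜) = 0 := hpres y horth
  have hTyx : (inner 𝕜 (A (T y)) (T x) : 𝕜) = 0 := by
    rw [sym (T y) (T x), ← inner_conj_symm, hTxy, map_zero]
  have hxy : (inner 𝕜 (A x) y : 𝕜) = 0 := horth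
  have hyx : (inner 𝕜 (A y) x : 𝕜) = 0 := by
    rw [sym y x, ← inner_conj_symm, hxy, map_zero]
  -- z = y + c • x
  have hz : z = y + c • x := by rw [hy]; abel
  -- expansion of ⟪A z, z⟫
  have expand : ∀ u v : H, (inner 𝕜 (A u) v : 𝕜) = 0 → (inner 𝕜 (A v) u : 𝕜) = 0 →
      RCLike.re (inner 𝕜 (A (v + c • u)) (v + c • u) : 𝕜)
        = RCLike.re (inner 𝕜 (A v) v : 𝕜) + ‖c‖ ^ 2 * RCLike.re (inner 𝕜 (A u) u : 𝕜) := by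
    intro u v h1 h2
    have : (inner 𝕜 (A (v + c • u)) (v + c • u) : 𝕜)
        = inner 𝕜 (A v) v + (‖c‖ ^ 2 : ℝ) * inner 𝕜 (A u) u := by
      rw [map_add, map_smul, inner_add_left, inner_add_right, inner_add_right,
        inner_smul_left, inner_smul_right, inner_smul_left, inner_smul_right,
        h1, h2, ← mul_assoc, RCLike.conj_mul]
      push_cast
      ring
    rw [this, map_add, RCLike.re_ofReal_mul]
  have hzz : (1 : ℝ) = seminormA A y ^ 2 + ‖c‖ ^ 2 := by
    have h1 : seminormA A z ^ 2 = RCLike.re (inner 𝕜 (A z) z : 𝕜) := snA_sq A hA z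
    rw [hz1, one_pow] at h1
    rw [h1, hz, expand x y hxy hyx, snA_sq A hA y]
    have : RCLike.re (inner 𝕜 (A x) x : 𝕜) = 1 := hre1
    rw [this, mul_one]
  have hTz : T z = T y + c • T x := by rw [hz]; simp
  have hTzz : seminormA A (T z) ^ 2 = seminormA A (T y) ^ 2 + ‖c‖ ^ 2 * seminormA A (T x) ^ 2 := by
    rw [snA_sq A hA (T z), hTz, expand (T x) (T y) hTxy hTyx, snA_sq A hA (T y),
      snA_sq A hA (T x)]
  -- lower bounds
  set m := minNormA A T with hm
  have hm0 : 0 ≤ m := minNormA_nonneg A T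
  have hmx : m ≤ seminormA A (T x) := minNormA_le A T hx1
  have hmy : m * seminormA A y ≤ seminormA A (T y) := minNormA_mul_le A T hT y
  have hmy2 : m ^ 2 * seminormA A y ^ 2 ≤ seminormA A (T y) ^ 2 := by
    have h := mul_le_mul hmy hmy (mul_nonneg hm0 (snA_nonneg A y)) (snA_nonneg A (T y))
    calc m ^ 2 * seminormA A y ^ 2 = (m * seminormA A y) * (m * seminormA A y) := by ring
      _ ≤ _ := h
      _ = seminormA A (T y) ^ 2 := by ring
  have hc0 : c = 0 := by
    by_contra hne
    have hcpos : 0 < ‖c‖ ^ 2 := pow_pos (norm_pos_iff.mpr hne) 2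
    have hTx2 : m ^ 2 ≤ seminormA A (T x) ^ 2 :=
      pow_le_pow_left₀ hm0 hmx 2
    have key : seminormA A (T x) ^ 2 ≤ m ^ 2 := by
      have h1 : m ^ 2 = seminormA A (T y) ^ 2 + ‖c‖ ^ 2 * seminormA A (T x) ^ 2 := by
        rw [← hTzz, hz2]
      nlinarith [hmy2, hzz]
    have heq : seminormA A (T x) ^ 2 = m ^ 2 := le_antisymm key hTx2
    have : seminormA A (T x) = m := by
      have h3 := congrArg Real.sqrt heq
      rwa [Real.sqrt_sq (snA_nonneg A (T x)), Real.sqrt_sq hm0] at h3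
    exact hx2 this
  rw [ipA, sym z x, ← inner_conj_symm, ← hc, hc0, map_zero]
end

section
/- Let H be a Hilbert space over 𝕜 (𝕜 = ℝ or ℂ), A a positive bounded linear operator on H, T an A-bounded operator on H, and x ∈ H with ‖x‖_A = 1. Then ‖Tx‖_A = ‖T‖_A (i.e., x ∈ M_T^A) if and only if ⟨Ty, Tx⟩_A = ‖T‖_A² · ⟨y, x⟩_A for all y ∈ H. -/
open ContinuousLinearMap

variable {𝕜 H : Type*}

section Helpers

variable [RCLike 𝕜] [NormedAddCommGroup H] [InnerProductSpace 𝕜 H] [CompleteSpace H]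

lemma seminormA_nonneg' (A : H →L[𝕜] H) (z : H) : 0 ≤ seminormA A z :=
  Real.sqrt_nonneg _

lemma seminormA_sq' (A : H →L[𝕜] H) (hA : A.IsPositive) (z : H) :
    seminormA A z ^ 2 = RCLike.re (inner 𝕜 (A z) z : 𝕜) :=
  Real.sq_sqrt (hA.re_inner_nonneg_left z)

lemma seminormA_smul' (A : H →L[𝕜] H) (a : ℝ) (z : H) :
    seminormA A ((a : 𝕜) • z) = |a| * seminormA A z := by
  unfold seminormA
  rw [map_smul, inner_smul_left, inner_smul_right, ← mul_assoc, RCLike.conj_ofReal,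
    ← RCLike.ofReal_mul]
  rw [RCLike.re_ofReal_mul, Real.sqrt_mul (mul_self_nonneg a), Real.sqrt_mul_self_eq_abs]

/-- If `S` is positive and `re ⟪S x, x⟫ = 0` then `S x = 0`. -/
lemma isPositive_apply_eq_zero {S : H →L[𝕜] H} (hS : S.IsPositive) {x : H}
    (hx : RCLike.re (inner 𝕜 (S x) x : 𝕜) = 0) : S x = 0 := by
  have hsymm := (isSelfAdjoint_iff_isSymmetric.mp hS.isSelfAdjoint)
  set y := S x with hy
  have key : ∀ t : ℝ, 0 ≤ 2 * t * ‖S x‖ ^ 2 + t ^ 2 * RCLike.re (inner 𝕜 (S y) y : 𝕜) := by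
    intro t
    have h0 := hS.re_inner_nonneg_left (x + (t : 𝕜) • y)
    have hexp : (inner 𝕜 (S (x + (t : 𝕜) • y)) (x + (t : 𝕜) • y) : 𝕜)
        = inner 𝕜 (S x) x + (t : 𝕜) * inner 𝕜 (S x) y + (t : 𝕜) * inner 𝕜 (S y) x
          + (t : 𝕜) * (t : 𝕜) * inner 𝕜 (S y) y := by
      rw [map_add, map_smul, inner_add_left, inner_add_right, inner_add_right,
        inner_smul_left, inner_smul_right, inner_smul_left, inner_smul_right,
        RCLike.conj_ofReal]
      ring
    have hsx : (inner 𝕜 (S y) x : 𝕜) = starRingEnd 𝕜 (inner 𝕜 (S x) y) := by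
      have h1 : (inner 𝕜 (S y) x : 𝕜) = inner 𝕜 y (S x) := hsymm y x
      rw [h1]
      exact (inner_conj_symm y (S x)).symm
    rw [hexp, hsx] at h0
    simp only [map_add, RCLike.re_ofReal_mul, ← RCLike.ofReal_mul, RCLike.conj_re] at h0
    have hxy : (inner 𝕜 (S x) y : 𝕜) = inner 𝕜 (S x) (S x) := by rw [hy]
    have hre : RCLike.re (inner 𝕜 (S x) y : 𝕜) = ‖S x‖ ^ 2 := by
      rw [hxy]; exact_mod_cast inner_self_eq_norm_sq (𝕜 := 𝕜) (S x)
    rw [hx, hre] at h0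
    nlinarith [h0]
  have hb : 0 ≤ RCLike.re (inner 𝕜 (S y) y : 𝕜) := hS.re_inner_nonneg_left y
  set a := ‖S x‖ ^ 2 with ha
  set b := RCLike.re (inner 𝕜 (S y) y : 𝕜) with hbdef
  have ha0 : 0 ≤ a := sq_nonneg _
  have haz : a = 0 := by
    have k := key (-(a / (b + 1)))
    have hb1 : (0 : ℝ) < b + 1 := by linarith
    have k2 : 0 ≤ (2 * (-(a / (b + 1))) * a + (-(a / (b + 1))) ^ 2 * b) * (b + 1) ^ 2 :=
      mul_nonneg k (by positivity)
    have k3 : (2 * (-(a / (b + 1))) * a + (-(a / (b + 1))) ^ 2 * b) * (b + 1) ^ 2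
        = -(a ^ 2 * b) - 2 * a ^ 2 := by
      field_simp
      ring
    rw [k3] at k2
    have hle : a ≤ 0 := by nlinarith [mul_nonneg hb (sq_nonneg a), sq_nonneg a]
    exact le_antisymm hle ha0
  have : ‖S x‖ = 0 := by
    have := haz
    rw [ha] at this
    nlinarith [norm_nonneg (S x)]
  exact norm_eq_zero.mp this

end Helpers

theorem statement9 [RCLike 𝕜] [NormedAddCommGroup H] [InnerProductSpace 𝕜 H] [CompleteSpace H]
    (A T : H →L[𝕜] H) (hA : A.IsPositive) (hT : ABounded A T)
    (x : H) (hx : seminormA A x = 1) :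
    seminormA A (T x) = opNormA A T ↔
      (∀ y : H, ipA A (T y) (T x) = (((opNormA A T) ^ 2 : ℝ) : 𝕜) * ipA A y x) := by
  obtain ⟨c₀, hc₀pos, hc₀⟩ := hT
  set c := opNormA A T with hc
  set s := ((fun u => seminormA A (T u)) '' {u : H | seminormA A u = 1}) with hs
  have hbdd : BddAbove s := by
    refine ⟨c₀, fun v hv => ?_⟩
    obtain ⟨u, hu, rfl⟩ := hv
    have := hc₀ u
    rw [Set.mem_setOf_eq.mp hu] at this
    linarith
  have hmem : seminormA A (T x) ∈ s := ⟨x, hx, rfl⟩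
  have hle1 : seminormA A (T x) ≤ c := le_csSup hbdd hmem
  have hc0 : 0 ≤ c := le_trans (seminormA_nonneg' A (T x)) hle1
  -- re ⟪A x, x⟫ = 1
  have hxre : RCLike.re (inner 𝕜 (A x) x : 𝕜) = 1 := by
    have := seminormA_sq' A hA x
    rw [hx] at this; linarith [this.symm]
  -- the fundamental bound
  have hnormle : ∀ z : H, seminormA A (T z) ≤ c * seminormA A z := by
    intro z
    rcases eq_or_lt_of_le (seminormA_nonneg' A z) with h0 | hpos
    · have h1 := hc₀ z
      rw [← h0] at h1 ⊢
      simp only [mul_zero] at h1 ⊢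
      exact le_antisymm h1 (seminormA_nonneg' A (T z)) ▸ le_of_eq rfl
    · set r := seminormA A z with hr
      have hrne : r ≠ 0 := ne_of_gt hpos
      have hu1 : seminormA A (((r⁻¹ : ℝ) : 𝕜) • z) = 1 := by
        rw [seminormA_smul', abs_of_pos (inv_pos.mpr hpos), inv_mul_cancel₀ hrne]
      have humem : seminormA A (T (((r⁻¹ : ℝ) : 𝕜) • z)) ∈ s := ⟨_, hu1, rfl⟩
      have hle : seminormA A (T (((r⁻¹ : ℝ) : 𝕜) • z)) ≤ c := le_csSup hbdd humem
      rw [map_smul, seminormA_smul', abs_of_pos (inv_pos.mpr hpos)] at hle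
      calc seminormA A (T z) = r * (r⁻¹ * seminormA A (T z)) := by
            field_simp
        _ ≤ r * c := by
            exact mul_le_mul_of_nonneg_left hle (le_of_lt hpos)
        _ = c * r := mul_comm _ _
  constructor
  · intro h y
    -- S = (c^2) • A - T† ∘ A ∘ T is positive and S x = 0
    set S : H →L[𝕜] H := ((c ^ 2 : ℝ) : 𝕜) • A - (adjoint T) ∘L (A ∘L T) with hS
    have hSsa : IsSelfAdjoint S := by
      refine IsSelfAdjoint.sub ?_ ?_
      · have hr : IsSelfAdjoint (((c ^ 2 : ℝ) : 𝕜)) := by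
          show star (((c ^ 2 : ℝ) : 𝕜)) = _
          rw [RCLike.star_def, RCLike.conj_ofReal]
        exact hr.smul hA.isSelfAdjoint
      · exact ((hA.adjoint_conj T).isSelfAdjoint)
    have hSinner : ∀ z : H, (inner 𝕜 (S z) z : 𝕜)
        = ((c ^ 2 : ℝ) : 𝕜) * inner 𝕜 (A z) z - inner 𝕜 (A (T z)) (T z) := by
      intro z
      rw [hS]
      simp only [sub_apply, smul_apply, comp_apply, inner_sub_left, inner_smul_left,
        RCLike.conj_ofReal, adjoint_inner_left]
    have hSpos : S.IsPositive := by
      refine ⟨isSelfAdjoint_iff_isSymmetric.mp hSsa, fun z => ?_⟩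
      have h1 : seminormA A (T z) ^ 2 ≤ c ^ 2 * seminormA A z ^ 2 := by
        have := hnormle z
        nlinarith [seminormA_nonneg' A (T z), seminormA_nonneg' A z]
      rw [seminormA_sq' A hA, seminormA_sq' A hA] at h1
      have : ContinuousLinearMap.reApplyInnerSelf S z = RCLike.re (inner 𝕜 (S z) z : 𝕜) := rfl
      rw [this, hSinner z]
      rw [map_sub, RCLike.re_ofReal_mul]
      linarith
    have hSx0 : S x = 0 := by
      apply isPositive_apply_eq_zero hSpos
      rw [hSinner x, map_sub, RCLike.re_ofReal_mul, hxre,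
        ← seminormA_sq' A hA (T x), h]
      ring
    -- conclude
    have hkey : ((c ^ 2 : ℝ) : 𝕜) • (A x) = adjoint T (A (T x)) := by
      have : (((c ^ 2 : ℝ) : 𝕜) • A) x - (adjoint T ∘L (A ∘L T)) x = 0 := by
        rw [← sub_apply, ← hS, hSx0]
      simpa [sub_eq_zero] using this
    have hAsymm := isSelfAdjoint_iff_isSymmetric.mp hA.isSelfAdjoint
    calc (ipA A (T y) (T x) : 𝕜) = inner 𝕜 (A (T y)) (T x) := rfl
      _ = inner 𝕜 (T y) (A (T x)) := hAsymm (T y) (T x)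
      _ = inner 𝕜 y (adjoint T (A (T x))) := (adjoint_inner_right T y (A (T x))).symm
      _ = inner 𝕜 y (((c ^ 2 : ℝ) : 𝕜) • (A x)) := by rw [hkey]
      _ = ((c ^ 2 : ℝ) : 𝕜) * inner 𝕜 y (A x) := inner_smul_right _ _ _
      _ = ((c ^ 2 : ℝ) : 𝕜) * inner 𝕜 (A y) x := by
            exact congrArg (((c ^ 2 : ℝ) : 𝕜) * ·) (hAsymm y x).symm
      _ = ((c ^ 2 : ℝ) : 𝕜) * ipA A y x := rfl
  · intro h
    have hxx := h x
    have : RCLike.re (inner 𝕜 (A (T x)) (T x) : 𝕜) = c ^ 2 := by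
      have h2 : RCLike.re (ipA A (T x) (T x)) = RCLike.re ((((c ^ 2 : ℝ) : 𝕜)) * ipA A x x) := by
        rw [hxx]
      rw [RCLike.re_ofReal_mul] at h2
      have : RCLike.re (ipA A x x) = 1 := hxre
      rw [this, mul_one] at h2
      exact h2
    unfold seminormA
    rw [this, Real.sqrt_sq hc0]
end

section
/- Let H be a Hilbert space over 𝕜 (𝕜 = ℝ or ℂ), A a positive bounded linear operator on H, and T a bounded linear operator on H admitting an A-adjoint (i.e., range(T* ∘ A) ⊆ range(A), where T* is the Hilbert adjoint). Let x ∈ closure(range A) be nonzero. Then T preserves A-orthogonality at x if and only if x is an A-eigenvector of T♯T, i.e., there exists λ ∈ 𝕜 such that T*(A(Tx)) = λ · Ax. -/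
open ContinuousLinearMap

variable {𝕜 H : Type*}

theorem statement15 [RCLike 𝕜] [NormedAddCommGroup H] [InnerProductSpace 𝕜 H] [CompleteSpace H]
    (A T : H →L[𝕜] H) (hA : A.IsPositive)
    (hT : Set.range (fun y => ContinuousLinearMap.adjoint T (A y)) ⊆ Set.range (A : H → H))
    (x : H) (hx : x ∈ closure (Set.range (A : H → H))) (hx0 : x ≠ 0) :
    PreservesAOrthAt A T x ↔
      ∃ lam : 𝕜, ContinuousLinearMap.adjoint T (A (T x)) = lam • A x := by
  have hAsa : ∀ z w : H, (inner 𝕜 (A z) w : 𝕜) = inner 𝕜 z (A w) := by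
    intro z w
    exact hA.1 z w
  constructor
  · intro hpres
    have hAx : A x ≠ 0 := by
      intro h0
      apply hx0
      have hz : Set.range (A : H → H) ⊆ {w : H | (inner 𝕜 x w : 𝕜) = 0} := by
        rintro _ ⟨z, rfl⟩
        show (inner 𝕜 x (A z) : 𝕜) = 0
        rw [← hAsa, h0, inner_zero_left]
      have hclosed : IsClosed {w : H | (inner 𝕜 x w : 𝕜) = 0} :=
        isClosed_eq (continuous_const.inner continuous_id) continuous_const
      have hcl := closure_minimal hz hclosed hx
      exact inner_self_eq_zero.mp hcl
    have hmem : ContinuousLinearMap.adjoint T (A (T x)) ∈ (Submodule.span 𝕜 {A x})ᗮᗮ := by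
      rw [Submodule.mem_orthogonal]
      intro v hv
      have hv0 : (inner 𝕜 (A x) v : 𝕜) = 0 :=
        hv (A x) (Submodule.mem_span_singleton_self _)
      have h1 := hpres v hv0
      have h2 : (inner 𝕜 (ContinuousLinearMap.adjoint T (A (T x))) v : 𝕜) = 0 := by
        rw [ContinuousLinearMap.adjoint_inner_left]; exact h1
      rw [← inner_conj_symm, h2, map_zero]
    rw [Submodule.orthogonal_orthogonal] at hmem
    rcases Submodule.mem_span_singleton.mp hmem with ⟨lam, hlam⟩
    exact ⟨lam, hlam.symm⟩
  · rintro ⟨lam, hlam⟩ y hy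
    show (inner 𝕜 (A (T x)) (T y) : 𝕜) = 0
    rw [← ContinuousLinearMap.adjoint_inner_left, hlam, inner_smul_left,
      show (inner 𝕜 (A x) y : 𝕜) = 0 from hy, mul_zero]
end

section
/- Let H be a Hilbert space over 𝕜 (𝕜 = ℝ or ℂ), A a positive bounded linear operator on H, and T an A-bounded operator on H. Then the A-norm attainment set M_T^A and the minimum A-norm attainment set m_T^A are either equal or mutually A-orthogonal: if M_T^A ≠ m_T^A, then ⟨x, y⟩_A = 0 for every x ∈ M_T^A and every y ∈ m_T^A. -/
open ContinuousLinearMap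

variable {𝕜 H : Type*}

section Aux

variable [RCLike 𝕜] [NormedAddCommGroup H] [InnerProductSpace 𝕜 H]

lemma semA_nonneg (A : H →L[𝕜] H) (x : H) : 0 ≤ seminormA A x := Real.sqrt_nonneg _

lemma semA_sq [CompleteSpace H] (A : H →L[𝕜] H) (hA : A.IsPositive) (x : H) :
    seminormA A x ^ 2 = RCLike.re (inner 𝕜 (A x) x : 𝕜) :=
  Real.sq_sqrt (hA.2 x)

lemma semA_smul (A : H →L[𝕜] H) (c : 𝕜) (x : H) :
    seminormA A (c • x) = ‖c‖ * seminormA A x := by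
  unfold seminormA
  rw [map_smul, inner_smul_left, inner_smul_right, ← mul_assoc, RCLike.conj_mul]
  rw [show ((‖c‖ : 𝕜) ^ 2) = ((‖c‖^2 : ℝ) : 𝕜) by push_cast; ring]
  rw [RCLike.re_ofReal_mul, Real.sqrt_mul (sq_nonneg _), Real.sqrt_sq (norm_nonneg _)]

lemma semA_expand [CompleteSpace H] (A : H →L[𝕜] H) (hA : A.IsPositive) (x y : H) (t : ℝ) :
    RCLike.re (inner 𝕜 (A (x + (t:𝕜) • y)) (x + (t:𝕜) • y) : 𝕜)
      = RCLike.re (inner 𝕜 (A x) x : 𝕜) + 2 * t * RCLike.re (inner 𝕜 (A x) y : 𝕜)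
        + t^2 * RCLike.re (inner 𝕜 (A y) y : 𝕜) := by
  have h1 : (inner 𝕜 (A y) x : 𝕜) = starRingEnd 𝕜 (inner 𝕜 (A x) y) := by
    conv_lhs => rw [← hA.isSelfAdjoint.adjoint_eq]
    rw [adjoint_inner_left, ← inner_conj_symm]
  rw [map_add, map_smul]
  simp only [inner_add_left, inner_add_right, inner_smul_left, inner_smul_right,
    RCLike.conj_ofReal, h1, map_add, RCLike.re_ofReal_mul, RCLike.conj_re, mul_assoc]
  ring

lemma semA_bddAbove (A T : H →L[𝕜] H) (hT : ABounded A T) :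
    BddAbove ((fun u => seminormA A (T u)) '' {u : H | seminormA A u = 1}) := by
  obtain ⟨c, _, hb⟩ := hT
  exact ⟨c, by rintro _ ⟨u, hu, rfl⟩; simpa [Set.mem_setOf_eq.mp hu] using hb u⟩

lemma semA_bddBelow (A T : H →L[𝕜] H) :
    BddBelow ((fun u => seminormA A (T u)) '' {u : H | seminormA A u = 1}) :=
  ⟨0, by rintro _ ⟨u, _, rfl⟩; exact semA_nonneg _ _⟩

lemma semA_unit_scale (A : H →L[𝕜] H) {v : H} (hv : 0 < seminormA A v) :
    seminormA A ((((seminormA A v)⁻¹ : ℝ) : 𝕜) • v) = 1 := by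
  rw [semA_smul, RCLike.norm_ofReal, abs_of_pos (inv_pos.mpr hv), inv_mul_cancel₀ hv.ne']

lemma semA_opNorm_bound (A T : H →L[𝕜] H) (hT : ABounded A T) {w : H}
    (hw : seminormA A w = 1) (v : H) :
    seminormA A (T v) ≤ opNormA A T * seminormA A v := by
  have hbdd := semA_bddAbove A T hT
  by_cases h0 : seminormA A v = 0
  · obtain ⟨c, _, hb⟩ := hT
    have h1 : seminormA A (T v) ≤ 0 := by simpa [h0] using hb v
    have h2 : 0 ≤ opNormA A T := by
      have := le_csSup hbdd ⟨w, hw, rfl⟩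
      have h3 := semA_nonneg A (T w)
      exact le_trans h3 this
    rw [h0, mul_zero]; exact h1
  · have hr : 0 < seminormA A v := lt_of_le_of_ne (semA_nonneg _ _) (Ne.symm h0)
    have hu := semA_unit_scale A hr
    have hle : seminormA A (T ((((seminormA A v)⁻¹ : ℝ) : 𝕜) • v)) ≤ opNormA A T :=
      le_csSup hbdd ⟨_, hu, rfl⟩
    rw [map_smul, semA_smul, RCLike.norm_ofReal, abs_of_pos (inv_pos.mpr hr)] at hle
    calc seminormA A (T v)
        = seminormA A v * ((seminormA A v)⁻¹ * seminormA A (T v)) := by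
          field_simp
      _ ≤ seminormA A v * opNormA A T := by
          exact mul_le_mul_of_nonneg_left hle hr.le
      _ = opNormA A T * seminormA A v := mul_comm _ _

lemma semA_minNorm_bound (A T : H →L[𝕜] H) (v : H) :
    minNormA A T * seminormA A v ≤ seminormA A (T v) := by
  by_cases h0 : seminormA A v = 0
  · rw [h0, mul_zero]; exact semA_nonneg _ _
  · have hr : 0 < seminormA A v := lt_of_le_of_ne (semA_nonneg _ _) (Ne.symm h0)
    have hu := semA_unit_scale A hr
    have hle : minNormA A T ≤ seminormA A (T ((((seminormA A v)⁻¹ : ℝ) : 𝕜) • v)) :=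
      csInf_le (semA_bddBelow A T) ⟨_, hu, rfl⟩
    rw [map_smul, semA_smul, RCLike.norm_ofReal, abs_of_pos (inv_pos.mpr hr)] at hle
    calc minNormA A T * seminormA A v
        ≤ ((seminormA A v)⁻¹ * seminormA A (T v)) * seminormA A v :=
          mul_le_mul_of_nonneg_right hle hr.le
      _ = seminormA A (T v) := by field_simp

lemma slope_zero {p K : ℝ} (hK : 0 ≤ K) (h : ∀ t : ℝ, 2*t*p ≤ t^2*K) : p = 0 := by
  by_contra hp
  have hp2 : 0 < p^2 := by positivity
  have hK1 : (0:ℝ) < K+1 := by linarith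
  have hu : (0:ℝ) < (K+1)⁻¹ := by positivity
  have h1 := h (p * (K+1)⁻¹)
  have hmul : (K+1) * (K+1)⁻¹ = 1 := mul_inv_cancel₀ (ne_of_gt hK1)
  nlinarith [mul_pos hp2 hu, mul_pos (mul_pos hp2 hu) hu]

lemma lin_zero {a b : ℝ} (h : ∀ t : ℝ, 0 ≤ a + 2*t*b) : b = 0 := by
  by_contra hb
  have h1 := h (-(a+1)/(2*b))
  have h2 : a + 2 * (-(a+1)/(2*b)) * b = -1 := by field_simp; ring
  rw [h2] at h1
  linarith

end Aux

set_option maxHeartbeats 1000000 in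
theorem statement19 [RCLike 𝕜] [NormedAddCommGroup H] [InnerProductSpace 𝕜 H] [CompleteSpace H]
    (A T : H →L[𝕜] H) (hA : A.IsPositive) (hT : ABounded A T)
    (hne : {u : H | seminormA A u = 1 ∧ seminormA A (T u) = opNormA A T}
        ≠ {u : H | seminormA A u = 1 ∧ seminormA A (T u) = minNormA A T}) :
    ∀ x ∈ {u : H | seminormA A u = 1 ∧ seminormA A (T u) = opNormA A T},
      ∀ y ∈ {u : H | seminormA A u = 1 ∧ seminormA A (T u) = minNormA A T},
        ipA A x y = 0 := by
  intro x hx y hy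
  obtain ⟨hx1, hx2⟩ := hx
  obtain ⟨hy1, hy2⟩ := hy
  by_contra hc
  set M := opNormA A T with hM
  set m := minNormA A T with hm
  -- rotate y so that the A-inner product with x is a positive real
  set c0 : 𝕜 := ipA A x y with hc0
  set lam : 𝕜 := (‖c0‖ : 𝕜) / c0 with hlam
  have hlamnorm : ‖lam‖ = 1 := by
    rw [hlam, norm_div, RCLike.norm_ofReal, abs_of_nonneg (norm_nonneg _),
      div_self (norm_ne_zero_iff.mpr hc)]
  set y' : H := lam • y with hy'
  have hy'1 : seminormA A y' = 1 := by rw [hy', semA_smul, hlamnorm, one_mul, hy1]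
  have hy'2 : seminormA A (T y') = m := by
    rw [hy', map_smul, semA_smul, hlamnorm, one_mul, hy2]
  set β : ℝ := ‖c0‖ with hβdef
  have hβ : 0 < β := norm_pos_iff.mpr hc
  have hip : (inner 𝕜 (A x) y' : 𝕜) = (β : 𝕜) := by
    rw [hy', inner_smul_right]
    show lam * c0 = _
    rw [hlam, div_mul_cancel₀ _ hc]
  -- squared quantities
  have hm0 : 0 ≤ m := Real.sInf_nonneg (by rintro _ ⟨u, _, rfl⟩; exact semA_nonneg _ _)
  have hmM : m ≤ M := by
    have h1 : m ≤ seminormA A (T x) := csInf_le (semA_bddBelow A T) ⟨x, hx1, rfl⟩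
    rwa [hx2] at h1
  have hM0 : 0 ≤ M := le_trans hm0 hmM
  set α : ℝ := RCLike.re (inner 𝕜 (A (T x)) (T y') : 𝕜) with hα
  have hMx : RCLike.re (inner 𝕜 (A (T x)) (T x) : 𝕜) = M^2 := by
    rw [← semA_sq A hA, hx2]
  have hmy : RCLike.re (inner 𝕜 (A (T y')) (T y') : 𝕜) = m^2 := by
    rw [← semA_sq A hA, hy'2]
  have hxAx : RCLike.re (inner 𝕜 (A x) x : 𝕜) = 1 := by
    rw [← semA_sq A hA, hx1, one_pow]
  have hyAy : RCLike.re (inner 𝕜 (A y') y' : 𝕜) = 1 := by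
    rw [← semA_sq A hA, hy'1, one_pow]
  have hxy : RCLike.re (inner 𝕜 (A x) y' : 𝕜) = β := by rw [hip, RCLike.ofReal_re]
  -- upper inequality, squared
  have keyU : ∀ t : ℝ, M^2 + 2*t*α + t^2*m^2 ≤ M^2 * (1 + 2*t*β + t^2) := by
    intro t
    have h1 := semA_opNorm_bound A T hT hx1 (x + (t:𝕜) • y')
    have h2 : seminormA A (T (x + (t:𝕜) • y'))^2
        ≤ (M * seminormA A (x + (t:𝕜) • y'))^2 :=
      pow_le_pow_left₀ (semA_nonneg _ _) h1 2
    rw [mul_pow, semA_sq A hA, semA_sq A hA,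
      show T (x + (t:𝕜) • y') = T x + (t:𝕜) • T y' by rw [map_add, map_smul],
      semA_expand A hA, semA_expand A hA, hMx, hmy, hxAx, hyAy, hxy, ← hα] at h2
    nlinarith [h2]
  -- lower inequality, squared
  have keyL : ∀ t : ℝ, m^2 * (1 + 2*t*β + t^2) ≤ M^2 + 2*t*α + t^2*m^2 := by
    intro t
    have h1 := semA_minNorm_bound A T (x + (t:𝕜) • y')
    have h2 : (m * seminormA A (x + (t:𝕜) • y'))^2
        ≤ seminormA A (T (x + (t:𝕜) • y'))^2 :=
      pow_le_pow_left₀ (mul_nonneg hm0 (semA_nonneg _ _)) h1 2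
    rw [mul_pow, semA_sq A hA, semA_sq A hA,
      show T (x + (t:𝕜) • y') = T x + (t:𝕜) • T y' by rw [map_add, map_smul],
      semA_expand A hA, semA_expand A hA, hMx, hmy, hxAx, hyAy, hxy, ← hα] at h2
    nlinarith [h2]
  have hK : 0 ≤ M^2 - m^2 := by nlinarith
  have e1 : α - β * M^2 = 0 := by
    apply slope_zero hK
    intro t
    have := keyU t
    nlinarith
  have e2 : α - β * m^2 = 0 := by
    apply lin_zero (a := M^2 - m^2)
    intro t
    have := keyL t
    nlinarith
  have hM2m2 : M^2 = m^2 := by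
    have : β * M^2 = β * m^2 := by linarith
    exact mul_left_cancel₀ hβ.ne' this
  have hMm : M = m := by
    rw [← Real.sqrt_sq hM0, ← Real.sqrt_sq hm0, hM2m2]
  exact hne (by rw [hMm])
end
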